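/- Let C_i, C_L ⊆ F_2^n be linear binary codes with 1 ≤ i ≤ L−1. Then the L-level Construction C constellation Γ_C = 2^{i−1}ψ(C_i) + 2^{L−1}ψ(C_L) + 2^L Z^n (all other component codes trivial) is geometrically uniform. -/

import Mathlib

/-- The natural embedding of `F_2^n` into `ℝ^n` (Euclidean space). -/
noncomputable def psiR {n : ℕ} (c : Fin n → ZMod 2) : EuclideanSpace ℝ (Fin n) :=
  WithLp.toLp 2 (fun i => ((c i).val : ℝ))

/-- The natural embedding of `ℤ^n` into `ℝ^n` (Euclidean space). -/
noncomputable def embZ {n : ℕ} (z : Fin n → ℤ) : EuclideanSpace ℝ (Fin n) :=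
  WithLp.toLp 2 (fun i => (z i : ℝ))

/-- The constellation `2^{i-1}ψ(C_i) + 2^{L-1}ψ(C_L) + 2^L ℤ^n`. -/
noncomputable def gammaTwoLevels {n : ℕ} (L i : ℕ)
    (Ci CL : Submodule (ZMod 2) (Fin n → ZMod 2)) : Set (EuclideanSpace ℝ (Fin n)) :=
  {v | ∃ ci ∈ Ci, ∃ cL ∈ CL, ∃ z : Fin n → ℤ,
        v = (2 : ℝ) ^ (i - 1) • psiR ci + (2 : ℝ) ^ (L - 1) • psiR cL + (2 : ℝ) ^ L • embZ z}


/-!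
For `γ = r • ψ(a) + s • w` with `a ∈ C` and `w ∈ Λ`, the isometry `v ↦ γ + σₐ v`, where `σₐ`
negates the coordinates in the support of `a`, sends `0` to `γ` and maps the constellation
`r ψ(C) + s Λ` onto itself: coordinatewise `ψ(a) + σₐ ψ(a') = ψ(a + a')` over `{0, 1}`, and
`σₐ Λ = Λ` whenever `Λ` is axis-symmetric. Composing such maps sends any point to any other.
Construction C with two nonzero levels has this shape, since
`2^{L-1} ψ(C_L) + 2^L ℤⁿ = 2^{L-1} (ψ(C_L) + 2ℤⁿ)` and the Construction A lattice
`ψ(C_L) + 2ℤⁿ` is axis-symmetric because `-1 ≡ 1 mod 2`.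
-/

def IsGeometricallyUniform {X : Type*} [PseudoEMetricSpace X] (S : Set X) : Prop :=
  ∀ x ∈ S, ∀ y ∈ S, ∃ T : X ≃ᵢ X, T x = y ∧ T '' S = S

theorem isGeometricallyUniform_of_basepoint {X : Type*} [PseudoEMetricSpace X] {S : Set X}
    (p : X) (h : ∀ x ∈ S, ∃ T : X ≃ᵢ X, T p = x ∧ T '' S = S) : IsGeometricallyUniform S := by
  intro x hx y hy
  obtain ⟨Tx, rfl, hSx⟩ := h x hx
  obtain ⟨Ty, rfl, hSy⟩ := h y hy
  have hSx_symm : Tx.symm '' S = S := by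
    simpa [Set.image_image] using congrArg (Tx.symm '' ·) hSx.symm
  refine ⟨Tx.symm.trans Ty, by simp, ?_⟩
  rw [show ⇑(Tx.symm.trans Ty) = Ty ∘ Tx.symm from rfl, Set.image_comp, hSx_symm, hSy]

theorem ZMod.val_add_eq_val_add_ite_neg (c c' : ZMod 2) :
    ((c + c').val : ℤ) = c.val + if c = 1 then -(c'.val : ℤ) else c'.val := by
  decide +revert

theorem ZMod.ite_neg_val_self (c : ZMod 2) : (if c = 1 then -(c.val : ℤ) else c.val) = -c.val := by
  decide +revert

section SignFlip

variable {n : ℕ}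

def signFlipInt {ι : Type*} (a : ι → ZMod 2) (w : ι → ℤ) : ι → ℤ :=
  fun j => if a j = 1 then -w j else w j

noncomputable def signFlip (a : Fin n → ZMod 2) :
    EuclideanSpace ℝ (Fin n) ≃ₗᵢ[ℝ] EuclideanSpace ℝ (Fin n) :=
  LinearIsometryEquiv.piLpCongrRight 2 fun j =>
    if a j = 1 then LinearIsometryEquiv.neg ℝ else LinearIsometryEquiv.refl ℝ ℝ

theorem signFlip_apply (a : Fin n → ZMod 2) (v : EuclideanSpace ℝ (Fin n)) (j : Fin n) :
    signFlip a v j = if a j = 1 then -v j else v j := by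
  by_cases h : a j = 1 <;> simp [signFlip, h]

theorem signFlip_symm (a : Fin n → ZMod 2) : (signFlip a).symm = signFlip a := by
  refine LinearIsometryEquiv.ext fun v => ?_
  rw [LinearIsometryEquiv.symm_apply_eq]
  ext j
  by_cases h : a j = 1 <;> simp [signFlip_apply, h]

theorem signFlip_embZ (a : Fin n → ZMod 2) (w : Fin n → ℤ) :
    signFlip a (embZ w) = embZ (signFlipInt a w) := by
  ext j
  by_cases h : a j = 1 <;> simp [signFlip_apply, embZ, signFlipInt, h]

theorem signFlip_psiR_self (a : Fin n → ZMod 2) : signFlip a (psiR a) = -psiR a := by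
  ext j
  simp only [signFlip_apply, psiR, PiLp.neg_apply]
  exact_mod_cast ZMod.ite_neg_val_self (a j)

theorem psiR_add_signFlip_psiR (a a' : Fin n → ZMod 2) :
    psiR a + signFlip a (psiR a') = psiR (a + a') := by
  ext j
  simp only [signFlip_apply, psiR, PiLp.add_apply, Pi.add_apply]
  exact_mod_cast (ZMod.val_add_eq_val_add_ite_neg (a j) (a' j)).symm

theorem embZ_add (w w' : Fin n → ℤ) : embZ (w + w') = embZ w + embZ w' := by
  ext j
  simp [embZ]

theorem embZ_sub (w w' : Fin n → ℤ) : embZ (w - w') = embZ w - embZ w' := by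
  ext j
  simp [embZ]

noncomputable def flipTranslate (a : Fin n → ZMod 2) (γ : EuclideanSpace ℝ (Fin n)) :
    EuclideanSpace ℝ (Fin n) ≃ᵢ EuclideanSpace ℝ (Fin n) :=
  (signFlip a).toIsometryEquiv.trans (IsometryEquiv.addLeft γ)

theorem flipTranslate_apply (a : Fin n → ZMod 2) (γ v : EuclideanSpace ℝ (Fin n)) :
    flipTranslate a γ v = γ + signFlip a v :=
  rfl

theorem flipTranslate_symm_apply (a : Fin n → ZMod 2) (γ v : EuclideanSpace ℝ (Fin n)) :
    (flipTranslate a γ).symm v = signFlip a (v - γ) := by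
  rw [← signFlip_symm, sub_eq_neg_add]
  rfl

end SignFlip

section Constellation

variable {n : ℕ}

def IsAxisSymmetric {ι : Type*} (Λ : AddSubgroup (ι → ℤ)) : Prop :=
  ∀ (a : ι → ZMod 2), ∀ w ∈ Λ, signFlipInt a w ∈ Λ

def codeLatticeConstellation (r s : ℝ) (C : Submodule (ZMod 2) (Fin n → ZMod 2))
    (Λ : AddSubgroup (Fin n → ℤ)) : Set (EuclideanSpace ℝ (Fin n)) :=
  {v | ∃ a ∈ C, ∃ w ∈ Λ, v = r • psiR a + s • embZ w}

variable (r s : ℝ) (a a' : Fin n → ZMod 2) (w w' : Fin n → ℤ)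

theorem flipTranslate_apply_smul_psiR_add_smul_embZ :
    flipTranslate a (r • psiR a + s • embZ w) (r • psiR a' + s • embZ w') =
      r • psiR (a + a') + s • embZ (w + signFlipInt a w') := by
  rw [flipTranslate_apply, map_add, map_smul, map_smul, signFlip_embZ,
    ← psiR_add_signFlip_psiR, embZ_add]
  module

theorem flipTranslate_symm_apply_smul_psiR_add_smul_embZ :
    (flipTranslate a (r • psiR a + s • embZ w)).symm (r • psiR a' + s • embZ w') =
      r • psiR (a + a') + s • embZ (signFlipInt a w' - signFlipInt a w) := by
  simp only [flipTranslate_symm_apply, map_sub, map_add, map_smul, signFlip_embZ,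
    signFlip_psiR_self, ← psiR_add_signFlip_psiR, embZ_sub]
  module

theorem isGeometricallyUniform_codeLatticeConstellation
    (C : Submodule (ZMod 2) (Fin n → ZMod 2)) {Λ : AddSubgroup (Fin n → ℤ)}
    (hΛ : IsAxisSymmetric Λ) : IsGeometricallyUniform (codeLatticeConstellation r s C Λ) := by
  refine isGeometricallyUniform_of_basepoint 0 ?_
  rintro _ ⟨a, ha, w, hw, rfl⟩
  let T := flipTranslate a (r • psiR a + s • embZ w)
  refine ⟨T, by simp [T, flipTranslate_apply], (T.toEquiv.bijOn' ?_ ?_).image_eq⟩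
  · rintro _ ⟨a', ha', w', hw', rfl⟩
    exact ⟨_, add_mem ha ha', _, add_mem hw (hΛ a w' hw'),
      flipTranslate_apply_smul_psiR_add_smul_embZ r s a a' w w'⟩
  · rintro _ ⟨a', ha', w', hw', rfl⟩
    exact ⟨_, add_mem ha ha', _, sub_mem (hΛ a w' hw') (hΛ a w hw),
      flipTranslate_symm_apply_smul_psiR_add_smul_embZ r s a a' w w'⟩

end Constellation

section ConstructionA

variable {n : ℕ}

/-- `ψ(C) + 2ℤⁿ`, as the integer vectors whose reduction mod 2 lies in `C`. -/
def constructionA {ι : Type*} (C : Submodule (ZMod 2) (ι → ZMod 2)) : AddSubgroup (ι → ℤ) :=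
  C.toAddSubgroup.comap ((Int.castAddHom (ZMod 2)).compLeft ι)

theorem mem_constructionA {ι : Type*} {C : Submodule (ZMod 2) (ι → ZMod 2)} {w : ι → ℤ} :
    w ∈ constructionA C ↔ (fun j => (w j : ZMod 2)) ∈ C :=
  Iff.rfl

theorem isAxisSymmetric_constructionA {ι : Type*} (C : Submodule (ZMod 2) (ι → ZMod 2)) :
    IsAxisSymmetric (constructionA C) := by
  intro a w hw
  rw [mem_constructionA] at hw ⊢
  convert hw using 2 with j
  by_cases h : a j = 1 <;> simp [signFlipInt, h, ZMod.neg_eq_self_mod_two]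

theorem embZ_val_add_two_mul (b : Fin n → ZMod 2) (z : Fin n → ℤ) :
    embZ (fun j => (b j).val + 2 * z j) = psiR b + (2 : ℝ) • embZ z := by
  ext j
  simp [embZ, psiR]

theorem embZ_eq_psiR_add_two_smul (w : Fin n → ℤ) :
    embZ w = psiR (fun j => (w j : ZMod 2)) + (2 : ℝ) • embZ (fun j => w j / 2) := by
  ext j
  have hval : (((w j : ZMod 2).val : ℤ) : ℝ) = ((w j % 2 : ℤ) : ℝ) :=
    congrArg _ (ZMod.val_intCast _)
  simp only [embZ, psiR, PiLp.add_apply, PiLp.smul_apply, smul_eq_mul]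
  push_cast at hval
  rw [hval]
  exact_mod_cast (Int.emod_add_mul_ediv (w j) 2).symm

theorem gammaTwoLevels_eq_codeLatticeConstellation {L : ℕ} (i : ℕ) (hL : 1 ≤ L)
    (Ci CL : Submodule (ZMod 2) (Fin n → ZMod 2)) :
    gammaTwoLevels L i Ci CL =
      codeLatticeConstellation (2 ^ (i - 1)) (2 ^ (L - 1)) Ci (constructionA CL) := by
  have hpow : (2 : ℝ) ^ L = 2 ^ (L - 1) * 2 := by rw [← pow_succ, Nat.sub_add_cancel hL]
  ext v
  constructor
  · rintro ⟨a, ha, b, hb, z, rfl⟩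
    refine ⟨a, ha, fun j => (b j).val + 2 * z j, ?_, ?_⟩
    · rw [mem_constructionA]
      convert hb using 2 with j
      simp [show (2 : ZMod 2) = 0 from rfl]
    · rw [embZ_val_add_two_mul, hpow, smul_add, smul_smul, add_assoc]
  · rintro ⟨a, ha, w, hw, rfl⟩
    refine ⟨a, ha, fun j => (w j : ZMod 2), hw, fun j => w j / 2, ?_⟩
    rw [embZ_eq_psiR_add_two_smul w, hpow, smul_add, smul_smul, add_assoc]

end ConstructionA

theorem constructionC_two_nonzero_levels_geometricallyUniform_general {n L i : ℕ}
    (hL : 2 ≤ L)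
    (Ci CL : Submodule (ZMod 2) (Fin n → ZMod 2)) :
    ∀ x ∈ gammaTwoLevels L i Ci CL, ∀ y ∈ gammaTwoLevels L i Ci CL,
      ∃ T : EuclideanSpace ℝ (Fin n) ≃ᵢ EuclideanSpace ℝ (Fin n),
        T x = y ∧ T '' gammaTwoLevels L i Ci CL = gammaTwoLevels L i Ci CL := by
  rw [gammaTwoLevels_eq_codeLatticeConstellation i (by omega)]
  exact isGeometricallyUniform_codeLatticeConstellation _ _ Ci (isAxisSymmetric_constructionA CL)

/-- An `L`-level Construction C with only two nonzero linear component codes `C_i` and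
`C_L` (`1 ≤ i ≤ L-1`), i.e. `Γ_C = 2^{i-1}ψ(C_i) + 2^{L-1}ψ(C_L) + 2^L ℤ^n`,
is geometrically uniform. -/
theorem constructionC_two_nonzero_levels_geometricallyUniform {n L i : ℕ}
    (hi : 1 ≤ i) (hiL : i ≤ L - 1) (hL : 2 ≤ L)
    (Ci CL : Submodule (ZMod 2) (Fin n → ZMod 2)) :
    ∀ x ∈ gammaTwoLevels L i Ci CL, ∀ y ∈ gammaTwoLevels L i Ci CL,
      ∃ T : EuclideanSpace ℝ (Fin n) ≃ᵢ EuclideanSpace ℝ (Fin n),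
        T x = y ∧ T '' gammaTwoLevels L i Ci CL = gammaTwoLevels L i Ci CL :=
  constructionC_two_nonzero_levels_geometricallyUniform_general hL Ci CL
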